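/- arXiv:0801.3747 — 6 statements merged into one kernel-verified Lean document; each statement's English description precedes it below -/
import Mathlib

section
/- For positive integers m and n, the Davenport constant of the group C_m ⊕ C_{mn} equals m + mn − 1, i.e., every sequence of m + mn − 1 elements of C_m ⊕ C_{mn} has a nonempty subsequence summing to zero, and there is a sequence of length m + mn − 2 with no such subsequence. -/
/-!
Olson's argument. For a prime `p`, Chevalley–Warning applied to the forms `∑ aᵢ Xᵢ ^ (p - 1)`
shows that every `2p - 1` elements of `C_p ⊕ C_p` contain a nonempty zero-sum subsequence, and,
after adding the form `∑ Xᵢ ^ (p - 1)`, that every `3p - 2` elements contain one of length at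
most `p`. Let `p ∣ m`, `m = p m'`, and let `φ : C_m ⊕ C_{mn} → C_p ⊕ C_p` be reduction mod `p`;
its kernel is the image of `C_{m'} ⊕ C_{m'n}` under multiplication by `p`. From a sequence of
length `p d + 2p - 1`, `d = m' + m'n - 2`, one removes `d + 1` disjoint nonempty blocks whose
images under `φ` sum to zero (all but the last of length at most `p`). Their sums are `d + 1`
elements of the kernel, so by induction on `m` some of them sum to zero, and the union of those
blocks is a zero-sum subsequence. For `m = 1` the pigeonhole principle on partial sums gives
`D(C_n) ≤ n`. Conversely, `m - 1` copies of `(1, 0)` and `mn - 1` copies of `(0, 1)` have no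
nonempty zero-sum subsequence.
-/

open Finset

theorem Multiset.le_map_iff {α β : Type*} {f : α → β} {S : Multiset α} {T : Multiset β} :
    T ≤ S.map f ↔ ∃ B ≤ S, B.map f = T := by
  refine ⟨fun h => ?_, fun ⟨B, hB, hBT⟩ => hBT ▸ Multiset.map_le_map hB⟩
  induction S using Quotient.inductionOn
  induction T using Quotient.inductionOn
  obtain ⟨l, hl, hsub⟩ := Multiset.coe_le.1 h
  obtain ⟨l', hl', rfl⟩ := List.sublist_map_iff.1 hsub
  exact ⟨l', Multiset.coe_le.2 hl'.subperm, Multiset.coe_eq_coe.2 hl⟩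

theorem Multiset.exists_le_card_eq_sum_eq_of_subset_toEnumFinset {α : Type*} [DecidableEq α]
    [AddCommMonoid α] {S : Multiset α} {t : Finset (α × ℕ)} (ht : t ⊆ S.toEnumFinset) :
    ∃ T ≤ S, T.card = #t ∧ T.sum = ∑ x ∈ t, x.1 :=
  ⟨t.val.map Prod.fst, Multiset.map_fst_le_of_subset_toEnumFinset ht, by simp, rfl⟩

theorem exists_le_ne_zero_sum_eq_zero_of_card_le {G : Type*} [AddCommGroup G] [Fintype G]
    (S : Multiset G) (hS : Fintype.card G ≤ S.card) : ∃ T ≤ S, T ≠ 0 ∧ T.sum = 0 := by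
  let P : ℕ → Multiset G := fun i => (S.toList.take i : Multiset G)
  have hP_mono : Monotone P := fun i j hij =>
    Multiset.coe_le.2 (List.take_prefix_take_left hij).sublist.subperm
  have hP_le : ∀ i, P i ≤ S := fun i => by
    simpa [P] using Multiset.coe_le.2 (List.take_sublist i S.toList).subperm
  have hP_card : ∀ i ≤ S.card, (P i).card = i := fun i hi => by simp [P, hi]
  obtain ⟨i, j, hij, hsum⟩ := Fintype.exists_ne_map_eq_of_card_lt
    (fun i : Fin (Fintype.card G + 1) => (P i).sum) (by simp)
  wlog hlt : i < j generalizing i j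
  · exact this j i hij.symm hsum.symm (lt_of_le_of_ne (not_lt.1 hlt) hij.symm)
  obtain ⟨D, hD⟩ := Multiset.le_iff_exists_add.1 (hP_mono hlt.le)
  have hcard := congrArg Multiset.card hD
  have hsum' := congrArg Multiset.sum hD
  rw [Multiset.card_add, hP_card i (by omega), hP_card j (by omega)] at hcard
  rw [Multiset.sum_add, show (P j).sum = (P i).sum from hsum.symm] at hsum'
  refine ⟨D, (Multiset.le_add_left _ _).trans (hD ▸ hP_le j), fun h => ?_, ?_⟩
  · rw [h, Multiset.card_zero] at hcard
    omega
  · simpa using hsum'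

open MvPolynomial in
theorem ZMod.exists_nonempty_sum_eq_zero_of_card_mul_lt {ι κ : Type*} [Fintype κ] {p : ℕ}
    [Fact p.Prime] (a : ι → κ → ZMod p) {s : Finset ι} (hs : Fintype.card κ * (p - 1) < #s) :
    ∃ t ⊆ s, t.Nonempty ∧ ∑ i ∈ t, a i = 0 := by
  classical
  have hp := (Fact.out : p.Prime)
  let f : κ → MvPolynomial s (ZMod p) := fun k => ∑ i : s, a i k • X i ^ (p - 1)
  have hdeg : ∑ k, (f k).totalDegree < Fintype.card s := by
    calc ∑ k, (f k).totalDegree ≤ ∑ _k : κ, (p - 1) := by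
          gcongr with k
          refine totalDegree_finsetSum_le fun i _ => ?_
          exact (totalDegree_smul_le ..).trans (totalDegree_X_pow ..).le
      _ < Fintype.card s := by simpa [mul_comm] using hs
  let zero_sol : {x : s → ZMod p // ∀ k, eval x (f k) = 0} :=
    ⟨0, fun k => by simp [f, hp.one_lt, tsub_eq_zero_iff_le]⟩
  have hN := char_dvd_card_solutions_of_fintype_sum_lt p hdeg
  obtain ⟨x, hx⟩ := Fintype.exists_ne_of_one_lt_card
    (hp.one_lt.trans_le <| Nat.le_of_dvd (Fintype.card_pos_iff.2 ⟨zero_sol⟩) hN) zero_sol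
  -- `x i ^ (p - 1)` is the indicator of `x i ≠ 0`, so the support of `x` is the required `t`.
  refine ⟨({i | x.1 i ≠ 0} : Finset s).map (Function.Embedding.subtype _), ?_, ?_, ?_⟩
  · simp +contextual [subset_iff]
  · rw [← Subtype.coe_ne_coe, Function.ne_iff] at hx
    obtain ⟨i, hi⟩ := hx
    exact ⟨i, by simpa [zero_sol] using hi⟩
  · funext k
    simpa [f, ZMod.pow_card_sub_one, Finset.sum_filter, Finset.sum_apply] using x.2 k

namespace ZMod

variable {ι : Type*} {p : ℕ} [Fact p.Prime]

theorem exists_nonempty_sum_eq_zero_prod (a : ι → ZMod p × ZMod p) {s : Finset ι}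
    (hs : 2 * p - 1 ≤ #s) : ∃ t ⊆ s, t.Nonempty ∧ ∑ i ∈ t, a i = 0 := by
  have hp := (Fact.out : p.Prime).two_le
  obtain ⟨t, hts, ht, hsum⟩ :=
    exists_nonempty_sum_eq_zero_of_card_mul_lt (fun i => ![(a i).1, (a i).2]) (s := s)
      (by rw [Fintype.card_fin]; omega)
  refine ⟨t, hts, ht, Prod.ext ?_ ?_⟩
  · simpa [Finset.sum_apply, Prod.fst_sum] using congrFun hsum 0
  · simpa [Finset.sum_apply, Prod.snd_sum] using congrFun hsum 1

theorem exists_nonempty_card_le_sum_eq_zero_prod [DecidableEq ι] (a : ι → ZMod p × ZMod p)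
    {s : Finset ι} (hs : 3 * p - 2 ≤ #s) :
    ∃ t ⊆ s, t.Nonempty ∧ #t ≤ p ∧ ∑ i ∈ t, a i = 0 := by
  have hp := (Fact.out : p.Prime).two_le
  obtain ⟨s', hs's, hs'⟩ := Finset.exists_subset_card_eq hs
  obtain ⟨t, hts', ht, hsum⟩ := exists_nonempty_sum_eq_zero_of_card_mul_lt
    (fun i => ![(a i).1, (a i).2, 1]) (s := s')
    (by rw [Fintype.card_fin]; omega)
  have hsum_a : ∑ i ∈ t, a i = 0 := Prod.ext
    (by simpa [Finset.sum_apply, Prod.fst_sum] using congrFun hsum 0)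
    (by simpa [Finset.sum_apply, Prod.snd_sum] using congrFun hsum 1)
  have hdvd : p ∣ #t := by
    simpa [Finset.sum_apply, ZMod.natCast_eq_zero_iff] using congrFun hsum 2
  have hts : t ⊆ s := hts'.trans hs's
  by_cases htp : #t ≤ p
  · exact ⟨t, hts, ht, htp, hsum_a⟩
  -- `#t` is a multiple of `p` in `(p, 3p - 2]`, so `#t = 2p`; split off a zero-sum part
  -- of length `≤ 2p - 1`, then it or its complement in `t` has length `≤ p`.
  have ht2p : #t = 2 * p := by
    obtain ⟨c, hc⟩ := hdvd
    have : #t ≤ 3 * p - 2 := hs' ▸ card_le_card hts'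
    have h1 : 1 < c := by by_contra h; interval_cases c <;> simp_all
    have h2 : c < 3 := by
      by_contra h
      have := Nat.mul_le_mul_left p (not_lt.1 h)
      omega
    interval_cases c; omega
  obtain ⟨u, hut, hu⟩ := Finset.exists_subset_card_eq (show 2 * p - 1 ≤ #t by omega)
  obtain ⟨t', ht'u, ht', hsum'⟩ := exists_nonempty_sum_eq_zero_prod a hu.ge
  have ht't : t' ⊆ t := ht'u.trans hut
  have ht'card : #t' ≤ 2 * p - 1 := hu ▸ card_le_card ht'u
  by_cases ht'p : #t' ≤ p
  · exact ⟨t', ht't.trans hts, ht', ht'p, hsum'⟩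
  refine ⟨t \ t', sdiff_subset.trans hts, ?_, ?_, ?_⟩
  · rw [← card_pos, card_sdiff_of_subset ht't]; omega
  · rw [card_sdiff_of_subset ht't]; omega
  · have := sum_sdiff ht't (f := a)
    rwa [hsum', add_zero, hsum_a] at this

theorem exists_le_ne_zero_sum_eq_zero_prod (S : Multiset (ZMod p × ZMod p))
    (hS : 2 * p - 1 ≤ S.card) : ∃ T ≤ S, T ≠ 0 ∧ T.sum = 0 := by
  classical
  obtain ⟨t, ht, hne, hsum⟩ :=
    exists_nonempty_sum_eq_zero_prod Prod.fst (s := S.toEnumFinset) (by simpa using hS)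
  obtain ⟨T, hTS, hT, hTsum⟩ := Multiset.exists_le_card_eq_sum_eq_of_subset_toEnumFinset ht
  exact ⟨T, hTS, fun h => hne.ne_empty (by simpa [h, eq_comm] using hT), hTsum.trans hsum⟩

theorem exists_le_ne_zero_card_le_sum_eq_zero_prod (S : Multiset (ZMod p × ZMod p))
    (hS : 3 * p - 2 ≤ S.card) : ∃ T ≤ S, T ≠ 0 ∧ T.card ≤ p ∧ T.sum = 0 := by
  classical
  obtain ⟨t, ht, hne, htp, hsum⟩ :=
    exists_nonempty_card_le_sum_eq_zero_prod Prod.fst (s := S.toEnumFinset) (by simpa using hS)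
  obtain ⟨T, hTS, hT, hTsum⟩ := Multiset.exists_le_card_eq_sum_eq_of_subset_toEnumFinset ht
  exact ⟨T, hTS, fun h => hne.ne_empty (by simpa [h, eq_comm] using hT), hT ▸ htp,
    hTsum.trans hsum⟩

end ZMod

section Blocks

variable {G Q : Type*} [AddCommMonoid G] [AddCommMonoid Q] (φ : G →+ Q) {e δ : ℕ}

theorem exists_block_of_le_map {S : Multiset G} {T : Multiset Q} (hTS : T ≤ S.map φ)
    (hT : T ≠ 0) (hsum : T.sum = 0) : ∃ B ≤ S, B ≠ 0 ∧ B.card = T.card ∧ φ B.sum = 0 := by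
  obtain ⟨B, hB, rfl⟩ := Multiset.le_map_iff.1 hTS
  exact ⟨B, hB, by rintro rfl; simp at hT, by simp, by rwa [map_multiset_sum]⟩

theorem exists_blocks_map_sum_eq_zero
    (hη : ∀ M : Multiset Q, e + δ ≤ M.card → ∃ T ≤ M, T ≠ 0 ∧ T.card ≤ e ∧ T.sum = 0)
    (hD : ∀ M : Multiset Q, δ ≤ M.card → ∃ T ≤ M, T ≠ 0 ∧ T.sum = 0)
    (d : ℕ) (S : Multiset G) (hS : e * d + δ ≤ S.card) :
    ∃ Bs : Multiset (Multiset G), Bs.card = d + 1 ∧ Bs.join ≤ S ∧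
      ∀ B ∈ Bs, B ≠ 0 ∧ φ B.sum = 0 := by
  induction d generalizing S with
  | zero =>
    obtain ⟨T, hTS, hT, hsum⟩ := hD (S.map φ) (by simpa using hS)
    obtain ⟨B, hBS, hB, -, hBsum⟩ := exists_block_of_le_map φ hTS hT hsum
    exact ⟨{B}, rfl, by simpa using hBS, by simpa using ⟨hB, hBsum⟩⟩
  | succ d ih =>
    obtain ⟨T, hTS, hT, hTcard, hsum⟩ :=
      hη (S.map φ) (by rw [Multiset.card_map]; nlinarith)
    obtain ⟨B, hBS, hB, hBcard, hBsum⟩ := exists_block_of_le_map φ hTS hT hsum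
    obtain ⟨R, rfl⟩ := Multiset.le_iff_exists_add.1 hBS
    obtain ⟨Bs, hcard, hjoin, hblocks⟩ :=
      ih R (by rw [Multiset.card_add] at hS; nlinarith)
    refine ⟨B ::ₘ Bs, by simp [hcard], by simpa using hjoin, ?_⟩
    simpa using ⟨⟨hB, hBsum⟩, hblocks⟩

end Blocks

theorem exists_le_ne_zero_sum_eq_zero_of_ker_le_range {K G Q : Type*} [AddCommGroup K]
    [AddCommGroup G] [AddCommGroup Q] (φ : G →+ Q) (ι : K →+ G) (hι : φ.ker ≤ ι.range)
    {e δ d : ℕ}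
    (hη : ∀ M : Multiset Q, e + δ ≤ M.card → ∃ T ≤ M, T ≠ 0 ∧ T.card ≤ e ∧ T.sum = 0)
    (hD : ∀ M : Multiset Q, δ ≤ M.card → ∃ T ≤ M, T ≠ 0 ∧ T.sum = 0)
    (hK : ∀ M : Multiset K, d + 1 ≤ M.card → ∃ T ≤ M, T ≠ 0 ∧ T.sum = 0)
    (S : Multiset G) (hS : e * d + δ ≤ S.card) : ∃ T ≤ S, T ≠ 0 ∧ T.sum = 0 := by
  obtain ⟨Bs, hcard, hjoin, hBs⟩ := exists_blocks_map_sum_eq_zero φ hη hD d S hS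
  have : CanLift G K ι (· ∈ Set.range ι) := ⟨fun _ => id⟩
  obtain ⟨M, hM⟩ : ∃ M : Multiset K, M.map ι = Bs.map Multiset.sum :=
    CanLift.prf _ fun x hx => by
      obtain ⟨B, hB, rfl⟩ := Multiset.mem_map.1 hx
      exact hι (hBs B hB).2
  obtain ⟨T, hTM, hT, hTsum⟩ := hK M (by simpa [hcard] using (congrArg Multiset.card hM).ge)
  obtain ⟨J, hJBs, hJ⟩ := Multiset.le_map_iff.1 (hM ▸ Multiset.map_le_map hTM :
    T.map ι ≤ Bs.map Multiset.sum)
  obtain ⟨R, rfl⟩ := Multiset.le_iff_exists_add.1 hJBs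
  obtain ⟨B, hBJ⟩ : ∃ B, B ∈ J := Multiset.exists_mem_of_ne_zero (by rintro rfl; simp_all)
  refine ⟨J.join, le_trans (by simp) hjoin, fun h => (hBs B (by simp [hBJ])).1 ?_, ?_⟩
  · exact Multiset.le_zero.1 (h ▸ Multiset.le_sum_of_mem hBJ)
  · rw [Multiset.sum_join, hJ, ← map_multiset_sum, hTsum, map_zero]

theorem AddMonoidHom.ker_prodMap_le_range_prodMap {A B A' B' C D : Type*} [AddGroup A]
    [AddGroup B] [AddGroup A'] [AddGroup B'] [AddGroup C] [AddGroup D] {f : A →+ C} {g : B →+ D}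
    {f' : A' →+ A} {g' : B' →+ B} (hf : f.ker ≤ f'.range) (hg : g.ker ≤ g'.range) :
    (f.prodMap g).ker ≤ (f'.prodMap g').range := fun x hx => by
  obtain ⟨y, hy⟩ := hf (show f x.1 = 0 from congrArg Prod.fst hx)
  obtain ⟨z, hz⟩ := hg (show g x.2 = 0 from congrArg Prod.snd hx)
  exact ⟨(y, z), Prod.ext hy hz⟩

namespace ZMod

/-- Multiplication by `p`, as a map `ZMod q →+ ZMod (p * q)`. -/
def scaleHom {q k : ℕ} (p : ℕ) (h : p * q = k) : ZMod q →+ ZMod k :=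
  ZMod.lift q ⟨zmultiplesHom _ (p : ZMod k), by
    simp only [zmultiplesHom_apply, natCast_zsmul, nsmul_eq_mul, ← Nat.cast_mul, mul_comm q, h,
      ZMod.natCast_self]⟩

theorem scaleHom_natCast {q k : ℕ} (p : ℕ) (h : p * q = k) (c : ℕ) :
    scaleHom p h c = ((p * c : ℕ) : ZMod k) := by
  rw [scaleHom, ← Int.cast_natCast c, ZMod.lift_coe]
  simp [mul_comm]

theorem ker_castHom_le_range_scaleHom {q k : ℕ} [NeZero k] (p : ℕ) (h : p * q = k) :
    (ZMod.castHom ⟨q, h.symm⟩ (ZMod p)).toAddMonoidHom.ker ≤ (scaleHom p h).range := by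
  intro a ha
  obtain ⟨c, hc⟩ : p ∣ a.val := by
    rw [← ZMod.natCast_eq_zero_iff, ← ha, ← ZMod.natCast_zmod_val a]
    simp
  exact ⟨c, by rw [scaleHom_natCast, ← hc, ZMod.natCast_zmod_val]⟩

end ZMod

theorem ZMod.exists_le_ne_zero_sum_eq_zero_prod_mul (m n : ℕ) (hm : 0 < m) (hn : 0 < n)
    (S : Multiset (ZMod m × ZMod (m * n))) (hS : m + m * n - 1 ≤ S.card) :
    ∃ T ≤ S, T ≠ 0 ∧ T.sum = 0 := by
  induction m using Nat.strong_induction_on with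
  | _ m ih =>
  obtain rfl | hm1 := eq_or_ne m 1
  · have : NeZero (1 * n) := ⟨by omega⟩
    exact exists_le_ne_zero_sum_eq_zero_of_card_le S (by simpa using hS)
  set p := m.minFac
  have hp : p.Prime := Nat.minFac_prime hm1
  have : Fact p.Prime := ⟨hp⟩
  obtain ⟨m', hm'⟩ : p ∣ m := Nat.minFac_dvd m
  have hm'pos : 0 < m' := Nat.pos_of_mul_pos_left (hm' ▸ hm)
  have : NeZero m := ⟨hm.ne'⟩
  have : NeZero (m * n) := ⟨(Nat.mul_pos hm hn).ne'⟩
  have h₁ : p * m' = m := hm'.symm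
  have h₂ : p * (m' * n) = m * n := by rw [hm', mul_assoc]
  refine exists_le_ne_zero_sum_eq_zero_of_ker_le_range
    ((ZMod.castHom ⟨m', h₁.symm⟩ (ZMod p)).toAddMonoidHom.prodMap
      (ZMod.castHom ⟨m' * n, h₂.symm⟩ (ZMod p)).toAddMonoidHom)
    ((scaleHom p h₁).prodMap (scaleHom p h₂))
    (AddMonoidHom.ker_prodMap_le_range_prodMap (ker_castHom_le_range_scaleHom p h₁)
      (ker_castHom_le_range_scaleHom p h₂))
    (e := p) (δ := 2 * p - 1) (d := m' + m' * n - 2)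
    (fun M hM => exists_le_ne_zero_card_le_sum_eq_zero_prod M (by omega))
    exists_le_ne_zero_sum_eq_zero_prod
    (fun M hM => ih m' ?_ hm'pos M (by have := Nat.mul_pos hm'pos hn; omega)) S ?_
  · exact hm' ▸ (Nat.lt_mul_iff_one_lt_left hm'pos).2 hp.one_lt
  · have hd : m' + m' * n - 2 + 2 = m' + m' * n := by have := Nat.mul_pos hm'pos hn; omega
    have : p * (m' + m' * n - 2) + p * 2 = m + m * n := by
      rw [← Nat.mul_add, hd, Nat.mul_add, h₁, h₂]
    have := hp.two_le
    omega

theorem ZMod.sum_ne_zero_of_le_replicate_one {k : ℕ} {T : Multiset (ZMod k)}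
    (hT : T ≤ Multiset.replicate (k - 1) 1) (hT0 : T ≠ 0) : T.sum ≠ 0 := by
  obtain ⟨j, hj, rfl⟩ := Multiset.le_replicate_iff.1 hT
  have hj0 : j ≠ 0 := by rintro rfl; simp at hT0
  rw [Multiset.sum_replicate, nsmul_one, Ne, ZMod.natCast_eq_zero_iff]
  exact fun h => hj0 (Nat.eq_zero_of_dvd_of_lt h (by omega))

theorem Multiset.sum_ne_zero_of_le_map_inl_add_map_inr {A B : Type*} [AddCommMonoid A]
    [AddCommMonoid B] {S₁ : Multiset A} {S₂ : Multiset B} (h₁ : ∀ T ≤ S₁, T ≠ 0 → T.sum ≠ 0)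
    (h₂ : ∀ T ≤ S₂, T ≠ 0 → T.sum ≠ 0) {T : Multiset (A × B)}
    (hT : T ≤ S₁.map (AddMonoidHom.inl A B) + S₂.map (AddMonoidHom.inr A B)) (hT0 : T ≠ 0) :
    T.sum ≠ 0 := by
  classical
  obtain ⟨T₁, hT₁, hT₁T⟩ := Multiset.le_map_iff.1
    (Multiset.inter_le_right (s := T) (t := S₁.map (AddMonoidHom.inl A B)))
  obtain ⟨T₂, hT₂, hT₂T⟩ := Multiset.le_map_iff.1 (tsub_le_iff_left.2 hT)
  have hsplit := Multiset.sub_add_inter T (S₁.map (AddMonoidHom.inl A B))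
  rw [← hT₁T, ← hT₂T] at hsplit
  intro hsum
  rw [← hsplit, Multiset.sum_add, ← map_multiset_sum, ← map_multiset_sum] at hsum
  have hT₁0 : T₁ = 0 := by_contra fun h => h₁ T₁ hT₁ h (by simpa using congrArg Prod.fst hsum)
  have hT₂0 : T₂ = 0 := by_contra fun h => h₂ T₂ hT₂ h (by simpa using congrArg Prod.snd hsum)
  exact hT0 (by simp [← hsplit, hT₁0, hT₂0])

theorem ZMod.exists_zero_sum_free_prod_mul (m n : ℕ) (hm : 0 < m) (hn : 0 < n) :
    ∃ S : Multiset (ZMod m × ZMod (m * n)), S.card = m + m * n - 2 ∧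
      ∀ T ≤ S, T ≠ 0 → T.sum ≠ 0 := by
  refine ⟨(Multiset.replicate (m - 1) 1).map (AddMonoidHom.inl _ _) +
    (Multiset.replicate (m * n - 1) 1).map (AddMonoidHom.inr _ _), ?_, fun T hT hT0 =>
    Multiset.sum_ne_zero_of_le_map_inl_add_map_inr (fun _ => sum_ne_zero_of_le_replicate_one)
      (fun _ => sum_ne_zero_of_le_replicate_one) hT hT0⟩
  have := Nat.mul_pos hm hn
  simp only [Multiset.card_add, Multiset.card_map, Multiset.card_replicate]
  omega

/-- Davenport constant of `C_m ⊕ C_{mn}` equals `m + mn - 1`. -/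
theorem stmt_0 (m n : ℕ) (hm : 0 < m) (hn : 0 < n) :
    (∀ S : Multiset (ZMod m × ZMod (m * n)), S.card = m + m * n - 1 →
      ∃ T : Multiset (ZMod m × ZMod (m * n)), T ≤ S ∧ T ≠ 0 ∧ T.sum = 0) ∧
    (∃ S : Multiset (ZMod m × ZMod (m * n)), S.card = m + m * n - 2 ∧
      ∀ T : Multiset (ZMod m × ZMod (m * n)), T ≤ S → T ≠ 0 → T.sum ≠ 0) :=
  ⟨fun S hS => ZMod.exists_le_ne_zero_sum_eq_zero_prod_mul m n hm hn S hS.ge,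
    ZMod.exists_zero_sum_free_prod_mul m n hm hn⟩
end

section
/- Let n be a positive integer and S a sequence over the cyclic group C_n. Then S is a minimal zero-sum sequence of maximal length (i.e., of length n) if and only if S = e^n for some generating element e of C_n. -/
/-!
Order a minimal zero-sum sequence of length `|G|` over a finite abelian group `G` as a list.
Its `|G|` prefix sums are distinct, since two equal ones would cut out a proper zero-sum block,
so they enumerate `G`. Swapping the first two terms `a, b` changes only the first prefix sum,
from `a` to `b`; as the sum of all prefix sums is `∑ g : G, g` in both orders, `a = b`. Hence the
sequence is `e^{|G|}`, and `e^k` is a minimal zero-sum sequence exactly when `e` has order `k`.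
-/

/-- A sequence over an abelian group: nonempty, sum zero, no proper nonempty zero-sum
subsequence. -/
def IsMinZeroSumSeq {G : Type*} [AddCommGroup G] (S : Multiset G) : Prop :=
  S ≠ 0 ∧ S.sum = 0 ∧ ∀ T : Multiset G, T ≤ S → T ≠ 0 → T ≠ S → T.sum ≠ 0

namespace IsMinZeroSumSeq

variable {G : Type*} [AddCommGroup G]

theorem sum_ne_zero_of_sublist {l m : List G} (h : IsMinZeroSumSeq (l : Multiset G))
    (hml : m.Sublist l) (hm : m ≠ []) (hlen : m.length < l.length) : m.sum ≠ 0 := by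
  refine h.2.2 m (Multiset.coe_le.mpr hml.subperm) (by simpa using hm) ?_
  intro hcoe
  exact hlen.ne (by simpa using congrArg Multiset.card hcoe)

theorem sum_take_succ_injective {l : List G} (h : IsMinZeroSumSeq (l : Multiset G)) :
    Function.Injective fun i : Fin l.length => (l.take (i + 1)).sum := by
  suffices key : ∀ i j : Fin l.length, i < j → (l.take (i + 1)).sum ≠ (l.take (j + 1)).sum by
    intro i j hij
    by_contra hne
    rcases lt_or_gt_of_ne hne with hlt | hlt
    exacts [key i j hlt hij, key j i hlt hij.symm]
  intro i j hij heq
  have hij' : (i : ℕ) < j := hij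
  set block := (l.take (j + 1)).drop (i + 1)
  have hsplit : l.take (j + 1) = l.take (i + 1) ++ block := by
    rw [← List.take_append_drop (i + 1) (l.take (j + 1)), List.take_take,
      min_eq_left (by omega)]
  have hlen : block.length = (j : ℕ) - i := by
    simp only [block, List.length_drop, List.length_take]
    omega
  have hj := j.isLt
  rw [hsplit, List.sum_append, left_eq_add] at heq
  exact h.sum_ne_zero_of_sublist (m := block)
    ((List.drop_sublist _ _).trans (List.take_sublist _ _))
    (List.ne_nil_of_length_pos (by omega)) (by omega) heq

theorem sum_sum_take_succ_eq_sum_univ [Fintype G] {l : List G}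
    (h : IsMinZeroSumSeq (l : Multiset G)) (hl : l.length = Fintype.card G) :
    ∑ i : Fin l.length, (l.take (i + 1)).sum = ∑ g : G, g :=
  ((Fintype.bijective_iff_injective_and_card _).mpr
    ⟨h.sum_take_succ_injective, by simp [hl]⟩).sum_comp id

theorem eq_of_cons_cons [Fintype G] {a b : G} {T : Multiset G}
    (h : IsMinZeroSumSeq (a ::ₘ b ::ₘ T)) (hcard : (a ::ₘ b ::ₘ T).card = Fintype.card G) :
    a = b := by
  have hab : ((a :: b :: T.toList : List G) : Multiset G) = a ::ₘ b ::ₘ T := by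
    rw [← Multiset.cons_coe, ← Multiset.cons_coe, Multiset.coe_toList]
  have hba : ((b :: a :: T.toList : List G) : Multiset G) = a ::ₘ b ::ₘ T := by
    rw [← Multiset.cons_coe, ← Multiset.cons_coe, Multiset.coe_toList, Multiset.cons_swap]
  have hsum_ab := sum_sum_take_succ_eq_sum_univ (hab ▸ h) (by simpa using hcard)
  have hsum_ba := sum_sum_take_succ_eq_sum_univ (hba ▸ h) (by simpa using hcard)
  change ∑ i : Fin (T.toList.length + 1 + 1), _ = _ at hsum_ab hsum_ba
  rw [Fin.sum_univ_succ] at hsum_ab hsum_ba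
  simp only [Fin.val_zero, Fin.val_succ, List.take_succ_cons, List.sum_cons, List.take_zero,
    List.sum_nil, add_zero, add_left_comm b a] at hsum_ab hsum_ba
  exact add_right_cancel (hsum_ab.trans hsum_ba.symm)

theorem eq_replicate_of_card_eq [Fintype G] {S : Multiset G} (h : IsMinZeroSumSeq S)
    (hcard : S.card = Fintype.card G) :
    ∃ e : G, S = Multiset.replicate (Fintype.card G) e := by
  classical
  obtain ⟨a, ha⟩ := Multiset.exists_mem_of_ne_zero h.1
  refine ⟨a, Multiset.eq_replicate.mpr ⟨hcard, fun b hb => ?_⟩⟩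
  by_cases hba : b = a
  · exact hba
  have hb : b ∈ S.erase a := (Multiset.mem_erase_of_ne hba).mpr hb
  have hS : S = a ::ₘ b ::ₘ (S.erase a).erase b := by
    rw [Multiset.cons_erase hb, Multiset.cons_erase ha]
  rw [hS] at h hcard
  exact (h.eq_of_cons_cons hcard).symm

end IsMinZeroSumSeq

theorem isMinZeroSumSeq_replicate_iff {G : Type*} [AddCommGroup G] {k : ℕ} (hk : 0 < k)
    (e : G) : IsMinZeroSumSeq (Multiset.replicate k e) ↔ addOrderOf e = k := by
  have replicate_inj {i j : ℕ} : Multiset.replicate i e = Multiset.replicate j e ↔ i = j :=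
    ⟨fun h => by simpa using congrArg Multiset.card h, congrArg (Multiset.replicate · e)⟩
  rw [addOrderOf_eq_iff hk]
  constructor
  · rintro ⟨-, hsum, hmin⟩
    refine ⟨by simpa using hsum, fun j hjk hj => ?_⟩
    simpa using hmin (Multiset.replicate j e) (Multiset.replicate_le_replicate _ |>.mpr hjk.le)
      (replicate_inj.not.mpr hj.ne') (replicate_inj.not.mpr hjk.ne)
  · rintro ⟨hsum, hmin⟩
    refine ⟨replicate_inj.not.mpr hk.ne', by simpa using hsum, ?_⟩
    rintro T hT hT0 hTk
    obtain ⟨j, hjk, rfl⟩ := Multiset.le_replicate_iff.mp hT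
    simpa using hmin j (hjk.lt_of_ne (replicate_inj.not.mp hTk))
      (Nat.pos_of_ne_zero (replicate_inj.not.mp hT0))

/-- A sequence over `C_n` is a minimal zero-sum sequence of maximal length `n` iff it is
`e^n` for a generator `e`. -/
theorem stmt_1 (n : ℕ) (hn : 0 < n) (S : Multiset (ZMod n)) :
    (IsMinZeroSumSeq S ∧ S.card = n) ↔
      ∃ e : ZMod n, addOrderOf e = n ∧ S = Multiset.replicate n e := by
  have : NeZero n := ⟨hn.ne'⟩
  constructor
  · rintro ⟨hS, hcard⟩
    obtain ⟨e, rfl⟩ := hS.eq_replicate_of_card_eq (by simpa using hcard)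
    rw [ZMod.card] at hS ⊢
    exact ⟨e, (isMinZeroSumSeq_replicate_iff hn e).mp hS, rfl⟩
  · rintro ⟨e, he, rfl⟩
    exact ⟨(isMinZeroSumSeq_replicate_iff hn e).mpr he, Multiset.card_replicate n e⟩
end

section
/- Let G ≅ C_m ⊕ C_{mn} with m ≥ 2, and let {e₁, e₂} be a basis of G with ord(e₂) = mn. Fix {j,k} = {1,2} and nonnegative integers x₁, …, x_{ord(e_k)} with x₁ + ⋯ + x_{ord(e_k)} ≡ −1 (mod ord(e_j)). Then the sequence S = e_j^{ord(e_j)−1} · ∏_{i=1}^{ord(e_k)} (−x_i e_j + e_k) is a minimal zero-sum sequence over G of length m + mn − 1. -/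
/-- `{e₁, e₂}` is a basis: independent elements generating the group. -/
def IsBasisPair {G : Type*} [AddCommGroup G] (e1 e2 : G) : Prop :=
  AddSubgroup.closure {e1, e2} = ⊤ ∧
  ∀ a b : ℤ, a • e1 + b • e2 = 0 → a • e1 = 0 ∧ b • e2 = 0

/-!
Every term `-xᵢ eⱼ + eₖ` is congruent to `eₖ` modulo `⟨eⱼ⟩`, so by independence of `eⱼ, eₖ` a
zero-sum subsequence `T` of `S` takes either none or all `ord(eₖ)` of these terms. In the first
case `T` is a zero-sum subsequence of `eⱼ^(ord(eⱼ)-1)`, in the second case its complement in `S`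
is; such a subsequence is empty, so `T` is empty or `T = S`.
-/

namespace Multiset

lemma exists_eq_add_of_le_add {α : Type*} [DecidableEq α] {s t u : Multiset α} (h : s ≤ t + u) :
    ∃ v ≤ t, ∃ w ≤ u, s = v + w :=
  ⟨s ∩ t, inter_le_right, s - t, Multiset.sub_le_iff_le_add.mpr (by rwa [add_comm]),
    (sub_add_inter s t).symm.trans (add_comm _ _)⟩

variable {G : Type*} [AddCommGroup G]

lemma sum_sub_card_nsmul_mem {H : AddSubgroup G} {b : G} {s : Multiset G}
    (hs : ∀ g ∈ s, g - b ∈ H) : s.sum - card s • b ∈ H := by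
  have : s.sum - card s • b = (s.map (· - b)).sum := by
    rw [Multiset.sum_map_sub, map_id', map_const', sum_replicate]
  rw [this]
  exact H.multiset_sum_mem _ (by simpa using hs)

lemma eq_zero_of_le_replicate_of_sum_eq_zero {a : G} {s : Multiset G}
    (hs : s ≤ replicate (addOrderOf a - 1) a) (h0 : s.sum = 0) : s = 0 := by
  obtain ⟨r, hr, rfl⟩ := le_replicate_iff.mp hs
  rw [sum_replicate] at h0
  suffices r = 0 by rw [this, replicate_zero]
  by_contra hr0
  have := Nat.le_of_dvd (Nat.pos_of_ne_zero hr0) (addOrderOf_dvd_of_nsmul_eq_zero h0)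
  omega

end Multiset

section

open Multiset AddSubgroup

variable {G : Type*} [AddCommGroup G]

lemma addOrderOf_dvd_card_of_sum_mem_zmultiples {a b : G}
    (hab : ∀ c d : ℤ, c • a + d • b = 0 → c • a = 0 ∧ d • b = 0) {s : Multiset G}
    (hs : ∀ g ∈ s, g - b ∈ zmultiples a) (hsum : s.sum ∈ zmultiples a) :
    addOrderOf b ∣ card s := by
  obtain ⟨c, hc⟩ : card s • b ∈ zmultiples a := by
    simpa using sub_mem hsum (sum_sub_card_nsmul_mem hs)
  have := (hab (-c) (card s) (by rw [neg_smul, show c • a = card s • b from hc, natCast_zsmul,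
    neg_add_cancel])).2
  exact_mod_cast addOrderOf_dvd_iff_zsmul_eq_zero.mpr this

lemma sum_replicate_add_map_eq_zero {a b : G} {x : Fin (addOrderOf b) → ℕ}
    (hx : (∑ i, (x i : ℤ)) ≡ -1 [ZMOD (addOrderOf a)]) :
    (replicate (addOrderOf a - 1) a + map (fun i => -(x i : ℤ) • a + b) Finset.univ.val).sum
      = 0 := by
  have ha : 0 < addOrderOf a := by
    by_contra! h
    rw [Nat.le_zero.mp h, Nat.cast_zero, Int.modEq_zero_iff] at hx
    have : 0 ≤ ∑ i, (x i : ℤ) := by positivity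
    omega
  have hBsum : ∑ i, (-(x i : ℤ) • a + b) = a := by
    rw [Finset.sum_add_distrib, ← Finset.sum_smul, Finset.sum_neg_distrib, neg_smul,
      zsmul_eq_zsmul_iff_modEq.mpr hx, Finset.sum_const, Finset.card_univ, Fintype.card_fin,
      addOrderOf_nsmul_eq_zero]
    simp
  rw [sum_add, ← Finset.sum_eq_multiset_sum, hBsum, sum_replicate, ← succ_nsmul,
    Nat.sub_add_cancel ha, addOrderOf_nsmul_eq_zero]

theorem isMinZeroSumSeq_replicate_add_map {a b : G}
    (hab : ∀ c d : ℤ, c • a + d • b = 0 → c • a = 0 ∧ d • b = 0) (hb : 0 < addOrderOf b)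
    {x : Fin (addOrderOf b) → ℕ} (hx : (∑ i, (x i : ℤ)) ≡ -1 [ZMOD (addOrderOf a)]) :
    IsMinZeroSumSeq (replicate (addOrderOf a - 1) a +
      map (fun i => -(x i : ℤ) • a + b) Finset.univ.val) := by
  classical
  have hsum := sum_replicate_add_map_eq_zero (b := b) hx
  set A := replicate (addOrderOf a - 1) a
  set B := map (fun i => -(x i : ℤ) • a + b) Finset.univ.val
  have hB : ∀ g ∈ B, g - b ∈ zmultiples a := by
    simp only [B, mem_map]
    rintro _ ⟨i, -, rfl⟩
    simp
  refine ⟨by simp [B, hb.ne'], hsum, fun T hTle hT0 hTS hT => ?_⟩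
  obtain ⟨T₁, hT₁, T₂, hT₂, rfl⟩ := exists_eq_add_of_le_add hTle
  have hT₁sum : T₁.sum ∈ zmultiples a :=
    multiset_sum_mem _ fun g hg => (eq_of_mem_replicate (mem_of_le hT₁ hg)) ▸ mem_zmultiples a
  have hdvd : addOrderOf b ∣ card T₂ := by
    refine addOrderOf_dvd_card_of_sum_mem_zmultiples hab (fun g hg => hB g (mem_of_le hT₂ hg)) ?_
    rw [sum_add, add_eq_zero_iff_neg_eq] at hT
    exact hT ▸ neg_mem hT₁sum
  rcases Nat.eq_zero_or_pos (card T₂) with h0 | hpos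
  · rw [card_eq_zero.mp h0, add_zero] at hT hT0
    exact hT0 (eq_zero_of_le_replicate_of_sum_eq_zero hT₁ hT)
  · have hT₂B : T₂ = B := eq_of_le_of_card_le hT₂ (by simpa [B] using Nat.le_of_dvd hpos hdvd)
    obtain ⟨U, hAU⟩ := Multiset.le_iff_exists_add.mp hT₁
    have hU : U = 0 := by
      refine eq_zero_of_le_replicate_of_sum_eq_zero ((Multiset.le_add_left U T₁).trans hAU.ge) ?_
      rw [hAU, sum_add, sum_add] at hsum
      rw [sum_add, hT₂B] at hT
      linear_combination (norm := abel) hsum - hT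
    exact hTS (by rw [hT₂B, hAU, hU, add_zero])

lemma IsBasisPair.symm {e1 e2 : G} (h : IsBasisPair e1 e2) : IsBasisPair e2 e1 :=
  ⟨by rw [Set.pair_comm]; exact h.1,
    fun c d hcd => (h.2 d c (by rwa [add_comm])).symm⟩

lemma IsBasisPair.card_eq_mul {e1 e2 : G} (h : IsBasisPair e1 e2) :
    Nat.card G = addOrderOf e1 * addOrderOf e2 := by
  have hdisj : Disjoint (zmultiples e1) (zmultiples e2) := by
    rw [disjoint_def]
    rintro _ ⟨c, rfl⟩ ⟨d, hd⟩
    exact (h.2 c (-d) (by simp [hd])).1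
  have hcompl : IsComplement (zmultiples e1 : Set G) (zmultiples e2) := by
    refine ⟨add_injective_of_disjoint hdisj, fun g => ?_⟩
    obtain ⟨c, d, rfl⟩ := mem_closure_pair.mp (h.1 ▸ mem_top g)
    exact ⟨(⟨c • e1, zsmul_mem_zmultiples e1 c⟩, ⟨d • e2, zsmul_mem_zmultiples e2 d⟩), rfl⟩
  rw [← hcompl.card_mul_card, SetLike.coe_sort_coe, SetLike.coe_sort_coe, Nat.card_zmultiples,
    Nat.card_zmultiples]

end

/-- The sequences of type (1) are minimal zero-sum sequences of length `m + mn - 1`. -/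
theorem stmt_3 (m n : ℕ) (hm : 2 ≤ m) (hn : 0 < n)
    (G : Type*) [AddCommGroup G] (hG : Nonempty (G ≃+ ZMod m × ZMod (m * n)))
    (e1 e2 : G) (hbasis : IsBasisPair e1 e2) (he2 : addOrderOf e2 = m * n)
    (ej ek : G) (hjk : (ej, ek) = (e1, e2) ∨ (ej, ek) = (e2, e1))
    (x : Fin (addOrderOf ek) → ℕ)
    (hx : (∑ i, (x i : ℤ)) ≡ -1 [ZMOD (addOrderOf ej)]) :
    IsMinZeroSumSeq (Multiset.replicate (addOrderOf ej - 1) ej +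
      Multiset.map (fun i => -(x i : ℤ) • ej + ek) Finset.univ.val) ∧
    (Multiset.replicate (addOrderOf ej - 1) ej +
      Multiset.map (fun i => -(x i : ℤ) • ej + ek) Finset.univ.val).card
      = m + m * n - 1 := by
  obtain ⟨φ⟩ := hG
  have : NeZero m := ⟨by omega⟩
  have : NeZero (m * n) := ⟨by positivity⟩
  have : Finite G := Finite.of_equiv _ φ.toEquiv.symm
  have he1 : addOrderOf e1 = m := by
    have h := hbasis.card_eq_mul
    rw [Nat.card_congr φ.toEquiv, Nat.card_prod, Nat.card_zmod, Nat.card_zmod, he2] at h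
    exact (Nat.eq_of_mul_eq_mul_right (by positivity) h).symm
  obtain ⟨hbasis', hord⟩ :
      IsBasisPair ej ek ∧ addOrderOf ej + addOrderOf ek = m + m * n := by
    rcases hjk with h | h <;> obtain ⟨rfl, rfl⟩ := Prod.ext_iff.mp h
    · exact ⟨hbasis, by rw [he1, he2]⟩
    · exact ⟨hbasis.symm, by rw [he1, he2, add_comm]⟩
  refine ⟨isMinZeroSumSeq_replicate_add_map hbasis'.2 (addOrderOf_pos ek) hx, ?_⟩
  have := addOrderOf_pos ej
  simp only [Multiset.card_add, Multiset.card_replicate, Multiset.card_map, Finset.card_val,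
    Finset.card_univ, Fintype.card_fin]
  omega
end

section
/- Let G ≅ C_m ⊕ C_{mn} with m ≥ 2 and n ≥ 1, let s ∈ [1,n], and let {g₁, g₂} be a generating set of G with ord(g₂) = mn and, if s ≠ 1, m g₁ = m g₂. Let x₁, …, x_{(n+1−s)m} be nonnegative integers with x₁ + ⋯ + x_{(n+1−s)m} = m − 1. Then S = g₁^{sm−1} · ∏_{i=1}^{(n+1−s)m} (−x_i g₁ + g₂) is a minimal zero-sum sequence over G of length m + mn − 1. -/
open Finset

theorem Multiset.exists_le_of_le_map {α β : Type*} {f : α → β} {s : Multiset α}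
    {t : Multiset β} (h : t ≤ s.map f) : ∃ u ≤ s, t = u.map f := by
  induction s using Quotient.inductionOn
  induction t using Quotient.inductionOn
  obtain ⟨l, hperm, hsub⟩ := Multiset.coe_le.mp h
  obtain ⟨l', hl', rfl⟩ := List.sublist_map_iff.mp hsub
  exact ⟨l', Multiset.coe_le.mpr hl'.subperm, (Multiset.coe_eq_coe.mpr hperm).symm⟩

theorem Multiset.exists_of_le_replicate_add_map {α β : Type*} [DecidableEq β] {b : β}
    {f : α → β} {A : ℕ} {s : Multiset α} {t : Multiset β}
    (h : t ≤ replicate A b + s.map f) : ∃ a ≤ A, ∃ u ≤ s, t = replicate a b + u.map f := by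
  obtain ⟨a, ha, hinter⟩ := Multiset.le_replicate_iff.mp (Multiset.inter_le_right (s := t))
  obtain ⟨u, hu, hsub⟩ := Multiset.exists_le_of_le_map
    (Multiset.sub_le_iff_le_add'.mpr h : t - replicate A b ≤ s.map f)
  refine ⟨a, ha, u, hu, ?_⟩
  rw [← hinter, ← hsub, add_comm, Multiset.sub_add_inter]

theorem isMinZeroSumSeq_replicate_add_map_s4 {G ι : Type*} [AddCommGroup G] [Fintype ι]
    (g : G) (f : ι → G) {A : ℕ} (hA : 0 < A) (hsum : A • g + ∑ i, f i = 0)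
    (hsub : ∀ a ≤ A, ∀ J : Finset ι, a • g + ∑ i ∈ J, f i = 0 →
      (a = 0 ∧ J = ∅) ∨ (a = A ∧ J = univ)) :
    IsMinZeroSumSeq (Multiset.replicate A g + univ.val.map f) := by
  classical
  refine ⟨fun h => by simpa [hA.ne'] using congrArg Multiset.card h, by simpa using hsum,
    fun T hle hT0 hTS hT => ?_⟩
  obtain ⟨a, ha, u, hu, rfl⟩ := Multiset.exists_of_le_replicate_add_map hle
  set J : Finset ι := ⟨u, Multiset.nodup_of_le hu univ.nodup⟩
  have hJ : a • g + ∑ i ∈ J, f i = 0 := by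
    rw [← hT, Multiset.sum_add, Multiset.sum_replicate]; rfl
  rcases hsub a ha J hJ with ⟨rfl, hJe⟩ | ⟨rfl, hJu⟩
  · exact hT0 (by simp [show u = 0 from congrArg Finset.val hJe])
  · exact hTS (by rw [show u = univ.val from congrArg Finset.val hJu])

theorem addOrderOf_mk_eq_index_of_closure_pair_eq_top {G : Type*} [AddCommGroup G] {g h : G}
    (hgen : AddSubgroup.closure {g, h} = ⊤) :
    addOrderOf (g : G ⧸ AddSubgroup.zmultiples h) = (AddSubgroup.zmultiples h).index := by
  set H := AddSubgroup.zmultiples h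
  have hle : AddSubgroup.closure {g, h} ≤
      (AddSubgroup.zmultiples (g : G ⧸ H)).comap (QuotientAddGroup.mk' H) := by
    rw [AddSubgroup.closure_le, Set.insert_subset_iff, Set.singleton_subset_iff]
    refine ⟨AddSubgroup.mem_zmultiples _, ?_⟩
    simp [H, (QuotientAddGroup.eq_zero_iff h).mpr (AddSubgroup.mem_zmultiples h)]
  have htop : AddSubgroup.zmultiples (g : G ⧸ H) = ⊤ := by
    refine eq_top_iff.mpr fun q _ => ?_
    obtain ⟨x, rfl⟩ := QuotientAddGroup.mk'_surjective H q
    exact hle (hgen ▸ AddSubgroup.mem_top x)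
  rw [← Nat.card_zmultiples, htop, AddSubgroup.index_eq_card]
  exact Nat.card_congr AddSubgroup.topEquiv.toEquiv

theorem sum_neg_natCast_zsmul_add {G ι : Type*} [AddCommGroup G] (g h : G) (x : ι → ℕ)
    (J : Finset ι) :
    ∑ i ∈ J, (-(x i : ℤ) • g + h) + (∑ i ∈ J, x i) • g = #J • h := by
  simp [sum_add_distrib, sum_smul, natCast_zsmul]

theorem Nat.mul_sub_one_add_mul {m n s : ℕ} (hs1 : 1 ≤ s) (hsn : s ≤ n) :
    m * (s - 1) + (n + 1 - s) * m = m * n := by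
  rw [mul_comm _ m, ← mul_add, show s - 1 + (n + 1 - s) = n by omega]

theorem Nat.eq_zero_or_eq_of_mul_dvd_mul_add {m n s k j : ℕ} (hm : 0 < m) (hk : k < s)
    (hsn : s ≤ n) (hj : j ≤ (n + 1 - s) * m) (hdvd : m * n ∣ m * k + j) :
    (k = 0 ∧ j = 0) ∨ (k = s - 1 ∧ j = (n + 1 - s) * m) := by
  have hmk : m * k ≤ m * (s - 1) := Nat.mul_le_mul_left _ (by omega)
  have hsplit := Nat.mul_sub_one_add_mul (m := m) (by omega : 1 ≤ s) hsn
  obtain ⟨t, ht⟩ := hdvd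
  have ht1 : t ≤ 1 :=
    Nat.le_of_mul_le_mul_left (by omega : m * n * t ≤ m * n * 1) (Nat.mul_pos hm (by omega))
  interval_cases t
  · have hmk0 : m * k = 0 := by omega
    exact Or.inl ⟨(Nat.mul_eq_zero.mp hmk0).resolve_left hm.ne', by omega⟩
  · exact Or.inr ⟨Nat.eq_of_mul_eq_mul_left hm (by omega), by omega⟩

section TypeTwoSequence

variable {G ι : Type*} [AddCommGroup G] [Fintype ι] {g₁ g₂ : G} {m n s : ℕ} {x : ι → ℕ}

theorem mul_nsmul_eq_of_lt (hs : s ≠ 1 → m • g₁ = m • g₂) {k : ℕ} (hk : k < s) :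
    (m * k) • g₁ = (m * k) • g₂ := by
  by_cases h1 : s = 1
  · simp [show k = 0 by omega]
  · rw [mul_nsmul, mul_nsmul, hs h1]

theorem nsmul_add_sum_neg_zsmul_add_eq_zero (hs1 : 1 ≤ s) (hsn : s ≤ n)
    (hg₂ : addOrderOf g₂ = m * n) (hs : s ≠ 1 → m • g₁ = m • g₂)
    (hcard : Fintype.card ι = (n + 1 - s) * m) (hx : ∑ i, x i = m - 1) :
    (s * m - 1) • g₁ + ∑ i, (-(x i : ℤ) • g₁ + g₂) = 0 := by
  have h := sum_neg_natCast_zsmul_add g₁ g₂ x univ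
  rw [hx, card_univ, hcard] at h
  have hsm : s * m - 1 = m * (s - 1) + (m - 1) := by
    rcases m.eq_zero_or_pos with rfl | hm
    · simp
    · have : m ≤ s * m := Nat.le_mul_of_pos_left m hs1
      rw [Nat.mul_sub_one, mul_comm m s]
      omega
  calc (s * m - 1) • g₁ + ∑ i, (-(x i : ℤ) • g₁ + g₂)
      = (m * (s - 1)) • g₁ + (∑ i, (-(x i : ℤ) • g₁ + g₂) + (m - 1) • g₁) := by
        rw [hsm, add_nsmul]; abel
    _ = (m * (s - 1) + (n + 1 - s) * m) • g₂ := by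
        rw [h, mul_nsmul_eq_of_lt hs (by omega), add_nsmul]
    _ = 0 := by rw [Nat.mul_sub_one_add_mul hs1 hsn, ← hg₂, addOrderOf_nsmul_eq_zero]

theorem eq_zero_or_eq_of_nsmul_add_sum_neg_zsmul_add_eq_zero (hm : 0 < m) (hs1 : 1 ≤ s)
    (hsn : s ≤ n) (hord : addOrderOf (g₁ : G ⧸ AddSubgroup.zmultiples g₂) = m)
    (hg₂ : addOrderOf g₂ = m * n) (hs : s ≠ 1 → m • g₁ = m • g₂)
    (hcard : Fintype.card ι = (n + 1 - s) * m) (hx : ∑ i, x i = m - 1)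
    {a : ℕ} (ha : a ≤ s * m - 1) {J : Finset ι}
    (hJ : a • g₁ + ∑ i ∈ J, (-(x i : ℤ) • g₁ + g₂) = 0) :
    (a = 0 ∧ J = ∅) ∨ (a = s * m - 1 ∧ J = univ) := by
  have hsm : m ≤ s * m := Nat.le_mul_of_pos_left m hs1
  set X := ∑ i ∈ J, x i
  have hX : X ≤ m - 1 := hx ▸ sum_le_sum_of_subset (subset_univ J)
  have hsum : a • g₁ + #J • g₂ = X • g₁ := by
    rw [← sum_neg_natCast_zsmul_add, ← add_assoc, hJ, zero_add]
  -- in `G ⧸ ⟨g₂⟩` the relation reads `a • g₁ = X • g₁`, and there `g₁` has order `m > X`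
  have hmod : a % m = X := by
    have hq := congrArg (QuotientAddGroup.mk (s := AddSubgroup.zmultiples g₂)) hsum
    simp only [QuotientAddGroup.mk_add, QuotientAddGroup.mk_nsmul,
      (QuotientAddGroup.eq_zero_iff g₂).mpr (AddSubgroup.mem_zmultiples g₂), nsmul_zero,
      add_zero] at hq
    rw [nsmul_eq_nsmul_iff_modEq, hord] at hq
    exact Eq.trans hq (Nat.mod_eq_of_lt (by omega))
  obtain ⟨k, hk, ha'⟩ : ∃ k < s, a = X + m * k :=
    ⟨a / m, Nat.div_lt_of_lt_mul (by rw [mul_comm]; omega), by rw [← hmod, Nat.mod_add_div]⟩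
  have hzero : (m * k + #J) • g₂ = 0 := by
    rw [ha', add_nsmul, add_assoc, add_eq_left] at hsum
    rwa [add_nsmul, ← mul_nsmul_eq_of_lt hs hk]
  have hJle : #J ≤ (n + 1 - s) * m := hcard ▸ card_le_univ J
  rcases Nat.eq_zero_or_eq_of_mul_dvd_mul_add hm hk hsn hJle
    (hg₂ ▸ addOrderOf_dvd_of_nsmul_eq_zero hzero) with ⟨hk0, hJ0⟩ | ⟨hks, hJu⟩
  · have hJe : J = ∅ := card_eq_zero.mp hJ0
    have hX0 : X = 0 := by simp [X, hJe]
    exact Or.inl ⟨by simp [ha', hX0, hk0], hJe⟩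
  · have hJu' : J = univ := eq_univ_of_card J (hJu.trans hcard.symm)
    have hXm : X = m - 1 := by simp only [X, hJu', hx]
    refine Or.inr ⟨?_, hJu'⟩
    rw [ha', hXm, hks, Nat.mul_sub_one, mul_comm m s]
    omega

end TypeTwoSequence

theorem stmt_4_general (m n s : ℕ) (hm : 2 ≤ m) (hs1 : 1 ≤ s) (hsn : s ≤ n)
    (G : Type*) [AddCommGroup G] (hG : Nonempty (G ≃+ ZMod m × ZMod (m * n)))
    (g1 g2 : G) (hgen : AddSubgroup.closure {g1, g2} = ⊤)
    (hg2 : addOrderOf g2 = m * n) (hs : s ≠ 1 → m • g1 = m • g2)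
    (x : Fin ((n + 1 - s) * m) → ℕ) (hx : (∑ i, x i) = m - 1) :
    IsMinZeroSumSeq (Multiset.replicate (s * m - 1) g1 +
      Multiset.map (fun i => -(x i : ℤ) • g1 + g2) Finset.univ.val) ∧
    (Multiset.replicate (s * m - 1) g1 +
      Multiset.map (fun i => -(x i : ℤ) • g1 + g2) Finset.univ.val).card
      = m + m * n - 1 := by
  obtain ⟨e⟩ := hG
  have hm0 : 0 < m := by omega
  have hsm : 2 ≤ s * m := Nat.le_mul_of_pos_left m hs1 |>.trans' hm
  have hindex : (AddSubgroup.zmultiples g2).index = m := by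
    have h := (AddSubgroup.zmultiples g2).card_mul_index
    rw [Nat.card_zmultiples, hg2, Nat.card_congr e.toEquiv, Nat.card_prod, Nat.card_zmod,
      Nat.card_zmod, mul_comm m (m * n)] at h
    exact Nat.eq_of_mul_eq_mul_left (Nat.mul_pos hm0 (by omega)) h
  have hord := (addOrderOf_mk_eq_index_of_closure_pair_eq_top hgen).trans hindex
  have hcard := Fintype.card_fin ((n + 1 - s) * m)
  refine ⟨isMinZeroSumSeq_replicate_add_map_s4 g1 _ (by omega)
    (nsmul_add_sum_neg_zsmul_add_eq_zero hs1 hsn hg2 hs hcard hx) fun a ha J hJ =>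
      eq_zero_or_eq_of_nsmul_add_sum_neg_zsmul_add_eq_zero hm0 hs1 hsn hord hg2 hs hcard hx ha hJ,
    ?_⟩
  have hlen : s * m + (n + 1 - s) * m = m + m * n := by
    rw [← add_mul, Nat.add_sub_cancel' (by omega), add_mul, one_mul, mul_comm, add_comm]
  simp only [Multiset.card_add, Multiset.card_replicate, Multiset.card_map, card_val, card_univ,
    hcard]
  omega

/-- The sequences of type (2) are minimal zero-sum sequences of length `m + mn - 1`. -/
theorem stmt_4 (m n s : ℕ) (hm : 2 ≤ m) (hn : 1 ≤ n) (hs1 : 1 ≤ s) (hsn : s ≤ n)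
    (G : Type*) [AddCommGroup G] (hG : Nonempty (G ≃+ ZMod m × ZMod (m * n)))
    (g1 g2 : G) (hgen : AddSubgroup.closure {g1, g2} = ⊤)
    (hg2 : addOrderOf g2 = m * n) (hs : s ≠ 1 → m • g1 = m • g2)
    (x : Fin ((n + 1 - s) * m) → ℕ) (hx : (∑ i, x i) = m - 1) :
    IsMinZeroSumSeq (Multiset.replicate (s * m - 1) g1 +
      Multiset.map (fun i => -(x i : ℤ) • g1 + g2) Finset.univ.val) ∧
    (Multiset.replicate (s * m - 1) g1 +
      Multiset.map (fun i => -(x i : ℤ) • g1 + g2) Finset.univ.val).card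
      = m + m * n - 1 :=
  stmt_4_general m n s hm hs1 hsn G hG g1 g2 hgen hg2 hs x hx
end

section
/- Let m ≥ 2, t ≥ 2, and let {f₁, f₂} be a basis of C_m². Let s ∈ [1, t−1] and a_1, …, a_{(t−s)m} ∈ [0, m−1] with Σ a_i ≡ 1 (mod m). Then S = f₁^{sm−1} ∏_{i=1}^{(t−s)m}(a_i f₁ + f₂) is a zero-sum sequence over C_m² of length tm − 1 that cannot be written as a product of t nonempty zero-sum sequences. -/
open Multiset

theorem card_mul_le_card_of_eq_sum {M ι : Type*} [AddCommMonoid M] [Fintype ι]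
    {S : Multiset M} {n : ℕ} (hS : ∀ P ≤ S, P ≠ 0 → P.sum = 0 → n ≤ card P)
    {parts : ι → Multiset M}
    (hparts : ∀ i, parts i ≠ 0 ∧ (parts i).sum = 0) (heq : S = ∑ i, parts i) :
    Fintype.card ι * n ≤ card S := by
  have hle : ∀ i, parts i ≤ S := fun i =>
    heq ▸ Finset.single_le_sum (fun j _ => zero_le (parts j)) (Finset.mem_univ i)
  calc Fintype.card ι * n = ∑ _i : ι, n := by simp [mul_comm]
    _ ≤ ∑ i, card (parts i) := Finset.sum_le_sum fun i _ =>
        hS _ (hle i) (hparts i).1 (hparts i).2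
    _ = card S := by rw [heq, card_sum]

section

variable {G : Type*} [AddCommGroup G] {f1 f2 : G}

theorem exists_sum_eq_zsmul_add_card_filter_nsmul [DecidableEq G] {P : Multiset G}
    (hP : ∀ x ∈ P, x ≠ f1 → ∃ c : ℤ, x = c • f1 + f2) :
    ∃ c : ℤ, P.sum = c • f1 + (P.filter (· ≠ f1)).card • f2 := by
  induction P using Multiset.induction_on with
  | empty => exact ⟨0, by simp⟩
  | cons x P ih =>
    obtain ⟨c, hc⟩ := ih fun y hy => hP y (mem_cons_of_mem hy)
    by_cases hx : x = f1
    · refine ⟨c + 1, ?_⟩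
      rw [sum_cons, hc, filter_cons_of_neg (p := (· ≠ f1)) _ (not_not.mpr hx), hx, add_zsmul,
        one_zsmul]
      abel
    · obtain ⟨d, rfl⟩ := hP x (mem_cons_self x P) hx
      refine ⟨c + d, ?_⟩
      rw [sum_cons, hc, filter_cons_of_pos (p := (· ≠ f1)) _ hx, card_cons, add_zsmul,
        succ_nsmul]
      abel

theorem min_addOrderOf_le_card_of_sum_eq_zero
    (hind : ∀ a b : ℤ, a • f1 + b • f2 = 0 → b • f2 = 0) {P : Multiset G}
    (hP : ∀ x ∈ P, x ≠ f1 → ∃ c : ℤ, x = c • f1 + f2) (hne : P ≠ 0)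
    (hsum : P.sum = 0) : min (addOrderOf f1) (addOrderOf f2) ≤ card P := by
  classical
  obtain ⟨c, hc⟩ := exists_sum_eq_zsmul_add_card_filter_nsmul hP
  have hline : (P.filter (· ≠ f1)).card • f2 = 0 := by
    rw [← natCast_zsmul]
    exact hind c _ (by rw [natCast_zsmul, ← hc, hsum])
  by_cases hk : (P.filter (· ≠ f1)).card = 0
  · have hrep : P = replicate (card P) f1 :=
      eq_replicate_card.mpr fun x hx => not_not.mp (filter_eq_nil.mp (card_eq_zero.mp hk) x hx)
    have hpow : card P • f1 = 0 := by rw [← sum_replicate, ← hrep, hsum]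
    exact min_le_of_left_le
      (Nat.le_of_dvd (card_pos.mpr hne) (addOrderOf_dvd_of_nsmul_eq_zero hpow))
  · exact min_le_of_right_le <| (Nat.le_of_dvd (Nat.pos_of_ne_zero hk)
      (addOrderOf_dvd_of_nsmul_eq_zero hline)).trans (card_le_card (filter_le _ _))

variable {ι : Type*} [Fintype ι] (k : ℕ) (a : ι → ℕ)

theorem sum_replicate_add_map_eq :
    (replicate k f1 + map (fun i => a i • f1 + f2) Finset.univ.val).sum =
      (k + ∑ i, a i) • f1 + Fintype.card ι • f2 := by
  rw [sum_add, sum_replicate, ← Finset.sum_eq_multiset_sum, Finset.sum_add_distrib,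
    ← Finset.sum_smul, Finset.sum_const, Finset.card_univ, add_nsmul, add_assoc]

theorem card_replicate_add_map :
    card (replicate k f1 + map (fun i => a i • f1 + f2) Finset.univ.val) =
      k + Fintype.card ι := by
  simp

theorem eq_zsmul_add_of_mem_replicate_add_map {x : G}
    (hx : x ∈ replicate k f1 + map (fun i => a i • f1 + f2) Finset.univ.val) (hx1 : x ≠ f1) :
    ∃ c : ℤ, x = c • f1 + f2 := by
  rcases mem_add.mp hx with hx | hx
  · exact absurd (eq_of_mem_replicate hx) hx1
  · obtain ⟨i, -, rfl⟩ := mem_map.mp hx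
    exact ⟨a i, by rw [natCast_zsmul]⟩

end

theorem stmt_9_general (m t s : ℕ) (hm : 2 ≤ m) (ht : 2 ≤ t) (hs1 : 1 ≤ s) (hst : s ≤ t - 1)
    (G : Type*) [AddCommGroup G]
    (f1 f2 : G) (hb : IsBasisPair f1 f2)
    (hf1 : addOrderOf f1 = m) (hf2 : addOrderOf f2 = m)
    (a : Fin ((t - s) * m) → ℕ)
    (hsum : (∑ i, a i) ≡ 1 [MOD m]) :
    (Multiset.replicate (s * m - 1) f1 +
        Multiset.map (fun i => a i • f1 + f2) Finset.univ.val) ≠ 0 ∧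
    (Multiset.replicate (s * m - 1) f1 +
        Multiset.map (fun i => a i • f1 + f2) Finset.univ.val).sum = 0 ∧
    (Multiset.replicate (s * m - 1) f1 +
        Multiset.map (fun i => a i • f1 + f2) Finset.univ.val).card = t * m - 1 ∧
    ¬ ∃ parts : Fin t → Multiset G,
        (∀ i, parts i ≠ 0 ∧ (parts i).sum = 0) ∧
        (Multiset.replicate (s * m - 1) f1 +
          Multiset.map (fun i => a i • f1 + f2) Finset.univ.val) = ∑ i, parts i := by
  have htm : 1 < t * m := by nlinarith
  have hsm1 : 1 ≤ s * m := by nlinarith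
  have hsm : s * m ≤ t * m := Nat.mul_le_mul_right m (by omega)
  have hcard : card (Multiset.replicate (s * m - 1) f1 +
      Multiset.map (fun i => a i • f1 + f2) Finset.univ.val) = t * m - 1 := by
    rw [card_replicate_add_map, Fintype.card_fin, Nat.sub_mul]
    omega
  have hf1_coeff : m ∣ s * m - 1 + ∑ i, a i := by
    rw [← Nat.modEq_zero_iff_dvd]
    calc s * m - 1 + ∑ i, a i ≡ s * m - 1 + 1 [MOD m] := hsum.add_left _
      _ = s * m := by omega
      _ ≡ 0 [MOD m] := Nat.modEq_zero_iff_dvd.mpr (dvd_mul_left m s)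
  have hlong : ∀ P ≤ Multiset.replicate (s * m - 1) f1 +
      Multiset.map (fun i => a i • f1 + f2) Finset.univ.val,
      P ≠ 0 → P.sum = 0 → m ≤ card P :=
    fun P hP hne hzero => by
      simpa only [hf1, hf2, min_self] using min_addOrderOf_le_card_of_sum_eq_zero
        (fun c d h => (hb.2 c d h).2)
        (fun x hx => eq_zsmul_add_of_mem_replicate_add_map _ a (mem_of_le hP hx)) hne hzero
  refine ⟨fun h => by simp only [h, card_zero] at hcard; omega, ?_, hcard, ?_⟩
  · rw [sum_replicate_add_map_eq, Fintype.card_fin,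
      (addOrderOf_dvd_iff_nsmul_eq_zero).mp (hf1 ▸ hf1_coeff),
      (addOrderOf_dvd_iff_nsmul_eq_zero).mp (hf2 ▸ dvd_mul_left m (t - s)), add_zero]
  · rintro ⟨parts, hparts, heq⟩
    have hlen := card_mul_le_card_of_eq_sum hlong hparts heq
    rw [Fintype.card_fin] at hlen
    omega

/-- `S = f₁^{sm-1} ∏ (aᵢf₁+f₂)` with `Σaᵢ ≡ 1 (mod m)` is a zero-sum sequence of length
`tm - 1` over `C_m²` that is not a product of `t` nonempty zero-sum sequences. -/
theorem stmt_9 (m t s : ℕ) (hm : 2 ≤ m) (ht : 2 ≤ t) (hs1 : 1 ≤ s) (hst : s ≤ t - 1)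
    (G : Type*) [AddCommGroup G] (hG : Nonempty (G ≃+ ZMod m × ZMod m))
    (f1 f2 : G) (hb : IsBasisPair f1 f2)
    (hf1 : addOrderOf f1 = m) (hf2 : addOrderOf f2 = m)
    (a : Fin ((t - s) * m) → ℕ) (ha : ∀ i, a i ≤ m - 1)
    (hsum : (∑ i, a i) ≡ 1 [MOD m]) :
    (Multiset.replicate (s * m - 1) f1 +
        Multiset.map (fun i => a i • f1 + f2) Finset.univ.val) ≠ 0 ∧
    (Multiset.replicate (s * m - 1) f1 +
        Multiset.map (fun i => a i • f1 + f2) Finset.univ.val).sum = 0 ∧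
    (Multiset.replicate (s * m - 1) f1 +
        Multiset.map (fun i => a i • f1 + f2) Finset.univ.val).card = t * m - 1 ∧
    ¬ ∃ parts : Fin t → Multiset G,
        (∀ i, parts i ≠ 0 ∧ (parts i).sum = 0) ∧
        (Multiset.replicate (s * m - 1) f1 +
          Multiset.map (fun i => a i • f1 + f2) Finset.univ.val) = ∑ i, parts i :=
  stmt_9_general m t s hm ht hs1 hst G f1 f2 hb hf1 hf2 a hsum
end

section
/- Let m ≥ 2 and n ≥ 1, and let T be a sequence of length (n+1−s)m over C_m² (for some s ∈ [1,n]) all of whose terms are of the form a f₁ + f₂ with {f₁, f₂} a basis of C_m², and such that σ(T) = f₁. Then T admits a factorization T = S₀ S₁ ⋯ S_{n−s} where each S_i has length m, σ(S_i) = 0 for i ∈ [1, n−s], and σ(S₀) = f₁. -/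
/-!
Each term is `c • f₁ + f₂`, so `m` terms whose `f₁`-coefficients sum to a multiple of `m` have
sum `0`. Erdős–Ginzburg–Ziv, applied to the coefficients, splits off such blocks of length `m`
as long as `2m - 1` terms remain; the last block of `m` terms then carries the whole sum `f₁`.
-/

open Multiset

theorem Multiset.exists_le_card_eq_dvd_sum_map {α : Type*} [DecidableEq α] {m : ℕ} (c : α → ℤ)
    {T : Multiset α} (hT : 2 * m - 1 ≤ card T) :
    ∃ S ≤ T, card S = m ∧ (m : ℤ) ∣ (S.map c).sum := by
  obtain ⟨t, hts, ht⟩ :=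
    Int.erdos_ginzburg_ziv (s := T.toEnumFinset) (c ∘ Prod.fst) (by simpa using hT)
  exact ⟨t.1.map Prod.fst, map_fst_le_of_subset_toEnumFinset hts, by rw [card_map]; exact ht.1,
    by rw [map_map]; exact ht.2⟩

section CosetOfCyclic

variable {G : Type*} [AddCommGroup G] {m : ℕ} {f1 f2 : G} {c : G → ℤ}

theorem sum_eq_sum_map_zsmul_add_card_nsmul {S : Multiset G} (hS : ∀ g ∈ S, g = c g • f1 + f2) :
    S.sum = (S.map c).sum • f1 + card S • f2 := by
  conv_lhs => rw [← map_id' S, map_congr rfl hS]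
  rw [sum_map_add, Multiset.sum_smul, map_map, map_const', sum_replicate]
  rfl

theorem exists_le_card_eq_sum_eq_zero (hf1 : m • f1 = 0) (hf2 : m • f2 = 0) {T : Multiset G}
    (hT : ∀ g ∈ T, g = c g • f1 + f2) (hcard : 2 * m - 1 ≤ card T) :
    ∃ S ≤ T, card S = m ∧ S.sum = 0 := by
  classical
  obtain ⟨S, hST, hScard, ⟨j, hj⟩⟩ := exists_le_card_eq_dvd_sum_map c hcard
  refine ⟨S, hST, hScard, ?_⟩
  rw [sum_eq_sum_map_zsmul_add_card_nsmul fun g hg => hT g (mem_of_le hST hg), hj, hScard, hf2,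
    mul_comm, mul_zsmul, natCast_zsmul, hf1, zsmul_zero, add_zero]

theorem exists_factorization_card_eq_sum_eq_zero (hf1 : m • f1 = 0) (hf2 : m • f2 = 0) (k : ℕ)
    {T : Multiset G} (hT : ∀ g ∈ T, g = c g • f1 + f2) (hcard : card T = (k + 1) * m) :
    ∃ parts : Fin (k + 1) → Multiset G, T = ∑ i, parts i ∧ (∀ i, card (parts i) = m) ∧
      ∀ i, i ≠ 0 → (parts i).sum = 0 := by
  classical
  induction k generalizing T with
  | zero =>
    exact ⟨fun _ => T, by simp, by simpa using hcard, fun i hi => (hi (Fin.fin_one_eq_zero i)).elim⟩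
  | succ k ih =>
    obtain ⟨S, hST, hScard, hSsum⟩ := exists_le_card_eq_sum_eq_zero hf1 hf2 hT
      (by rw [hcard]; have := Nat.mul_le_mul_right m (by omega : 2 ≤ k + 1 + 1); omega)
    obtain ⟨parts, hparts, hcards, hsums⟩ :=
      ih (fun g hg => hT g (mem_of_le (Multiset.sub_le_self T S) hg))
        (by rw [card_sub hST, hcard, hScard, Nat.add_mul _ 1, one_mul, Nat.add_sub_cancel])
    refine ⟨Fin.snoc parts S, ?_, Fin.lastCases ?_ ?_, Fin.lastCases ?_ ?_⟩
    · rw [Fin.sum_univ_castSucc]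
      simp only [Fin.snoc_castSucc, Fin.snoc_last]
      rw [← hparts, tsub_add_cancel_of_le hST]
    · simpa using hScard
    · simpa using hcards
    · simpa using hSsum
    · intro i hi
      simpa using hsums i (by rintro rfl; exact hi rfl)

end CosetOfCyclic

theorem stmt_13_general (m n s : ℕ) (hsn : s ≤ n)
    (G : Type*) [AddCommGroup G]
    (f1 f2 : G)
    (hf1 : addOrderOf f1 = m) (hf2 : addOrderOf f2 = m)
    (T : Multiset G) (hTcard : T.card = (n + 1 - s) * m)
    (hT : ∀ g ∈ T, ∃ a : ℤ, g = a • f1 + f2) (hTsum : T.sum = f1) :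
    ∃ parts : Fin (n - s + 1) → Multiset G,
      T = ∑ i, parts i ∧ (∀ i, (parts i).card = m) ∧
      (parts 0).sum = f1 ∧ (∀ i, i ≠ 0 → (parts i).sum = 0) := by
  choose! c hc using hT
  obtain ⟨parts, hparts, hcards, hsums⟩ := exists_factorization_card_eq_sum_eq_zero
    (hf1 ▸ addOrderOf_nsmul_eq_zero f1) (hf2 ▸ addOrderOf_nsmul_eq_zero f2) (n - s) hc
    (by rw [hTcard, Nat.sub_add_comm hsn])
  refine ⟨parts, hparts, hcards, ?_, hsums⟩
  have hsum : T.sum = ∑ i, (parts i).sum := hparts ▸ map_sum sumAddMonoidHom parts Finset.univ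
  rw [← hTsum, hsum, Fintype.sum_eq_single 0 hsums]

/-- A sequence `T` of length `(n+1-s)m` over `C_m²` with all terms of the form
`a f₁ + f₂` and sum `f₁` admits an admissible factorization `T = S₀ S₁ ⋯ S_{n-s}`. -/
theorem stmt_13 (m n s : ℕ) (hm : 2 ≤ m) (hn : 1 ≤ n) (hs1 : 1 ≤ s) (hsn : s ≤ n)
    (G : Type*) [AddCommGroup G] (hG : Nonempty (G ≃+ ZMod m × ZMod m))
    (f1 f2 : G) (hb : IsBasisPair f1 f2)
    (hf1 : addOrderOf f1 = m) (hf2 : addOrderOf f2 = m)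
    (T : Multiset G) (hTcard : T.card = (n + 1 - s) * m)
    (hT : ∀ g ∈ T, ∃ a : ℤ, g = a • f1 + f2) (hTsum : T.sum = f1) :
    ∃ parts : Fin (n - s + 1) → Multiset G,
      T = ∑ i, parts i ∧ (∀ i, (parts i).card = m) ∧
      (parts 0).sum = f1 ∧ (∀ i, i ≠ 0 → (parts i).sum = 0) :=
  stmt_13_general m n s hsn G f1 f2 hf1 hf2 T hTcard hT hTsum
end
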